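/- arXiv:1901.00886 — 5 statements merged into one kernel-verified Lean document; each statement's English description precedes it below -/
import Mathlib

section
/- If F : [0,∞) → ℝ is uniformly bounded by U ≥ 0, then the normalizing constant A(α,β) = Σ_{x ∈ ℕ^P} exp(Σ_j (α_j x_j − log(x_j!)) − Σ_{j<l} β_{jl} F(x_j) F(x_l)) satisfies exp(Σ_j exp(α_j) − U² Σ_{j<l} |β_{jl}|) ≤ A(α,β) ≤ exp(Σ_j exp(α_j) + U² Σ_{j<l} |β_{jl}|). -/
open scoped BigOperators

noncomputable def nodeSum {P : ℕ} (α : Fin P → ℝ) (x : Fin P → ℕ) : ℝ :=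
  ∑ j, (α j * (x j : ℝ) - Real.log (Nat.factorial (x j)))

noncomputable def edgeSum {P : ℕ} (β : Fin P → Fin P → ℝ) (F : ℕ → ℝ) (x : Fin P → ℕ) : ℝ :=
  ∑ j, ∑ l, if j < l then β j l * F (x j) * F (x l) else 0

/-- Unnormalized weight of the pairwise MRF for counts. -/
noncomputable def w {P : ℕ} (α : Fin P → ℝ) (β : Fin P → Fin P → ℝ) (F : ℕ → ℝ)
    (x : Fin P → ℕ) : ℝ :=
  Real.exp (nodeSum α x - edgeSum β F x)

/-- Normalizing constant A(α,β). -/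
noncomputable def Anorm {P : ℕ} (α : Fin P → ℝ) (β : Fin P → Fin P → ℝ) (F : ℕ → ℝ) : ℝ :=
  ∑' x : Fin P → ℕ, w α β F x

/-- The transformation F(x) = (arctan x)^θ. -/
noncomputable def Fpow (θ : ℝ) : ℕ → ℝ := fun n => Real.arctan (n : ℝ) ^ θ

/-! The node part of the weight factorises into Poisson terms `e^{α_j x_j} / x_j!`, whose
sum over `ℕ^P` is `exp (∑ j, exp α_j)`; the edge part lies in `[-E, E]` with
`E = U² ∑_{j<l} |β_jl|`, so the weight is squeezed between `e^{∓E}` times the Poisson terms. -/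

theorem hasSum_prod_pi_of_nonneg {κ : Type*} (n : ℕ) {g : Fin n → κ → ℝ}
    (hg0 : ∀ i m, 0 ≤ g i m) (hg : ∀ i, Summable (g i)) :
    HasSum (fun x : Fin n → κ => ∏ i, g i (x i)) (∏ i, ∑' m, g i m) := by
  induction n with
  | zero => simp [hasSum_unique]
  | succ n ih =>
    set tail : (Fin n → κ) → ℝ := fun y => ∏ i : Fin n, g i.succ (y i)
    have hTail : HasSum tail (∏ i : Fin n, ∑' m, g i.succ m) :=
      ih (fun i => hg0 i.succ) (fun i => hg i.succ)
    have hPair : HasSum (fun p : κ × (Fin n → κ) => g 0 p.1 * tail p.2)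
        ((∑' m, g 0 m) * ∏ i : Fin n, ∑' m, g i.succ m) :=
      (hg 0).hasSum.mul hTail <| (hg 0).mul_of_nonneg hTail.summable (hg0 0)
        fun y => Finset.prod_nonneg fun i _ => hg0 i.succ (y i)
    rw [Fin.prod_univ_succ]
    convert (Fin.consEquiv fun _ => κ).symm.hasSum_iff.mpr hPair using 2 with x
    simp [tail, Fin.prod_univ_succ, Fin.consEquiv, Fin.tail]

theorem Real.hasSum_pow_div_factorial (x : ℝ) :
    HasSum (fun m : ℕ => x ^ m / m.factorial) (Real.exp x) := by
  rw [Real.exp_eq_exp_ℝ]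
  exact NormedSpace.expSeries_div_hasSum_exp x

theorem Summable.of_mul_le_of_le_mul {ι : Type*} {f g : ι → ℝ} {c d : ℝ} (hf : Summable f)
    (hlo : ∀ x, c * f x ≤ g x) (hhi : ∀ x, g x ≤ d * f x) : Summable g := by
  have hdiff : Summable fun x => g x - c * f x :=
    Summable.of_nonneg_of_le (fun x => sub_nonneg.mpr (hlo x))
      (fun x => by linarith [hhi x, sub_mul d c (f x)]) (hf.mul_left (d - c))
  simpa using hdiff.add (hf.mul_left c)

theorem HasSum.mul_le_tsum_and_tsum_le_mul {ι : Type*} {f g : ι → ℝ} {a c d : ℝ}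
    (hf : HasSum f a) (hlo : ∀ x, c * f x ≤ g x) (hhi : ∀ x, g x ≤ d * f x) :
    c * a ≤ ∑' x, g x ∧ ∑' x, g x ≤ d * a := by
  have hg := hf.summable.of_mul_le_of_le_mul hlo hhi
  exact ⟨(hf.mul_left c).tsum_eq ▸ (hf.summable.mul_left c).tsum_le_tsum hlo hg,
    (hf.mul_left d).tsum_eq ▸ hg.tsum_le_tsum hhi (hf.summable.mul_left d)⟩

theorem exp_nodeSum {P : ℕ} (α : Fin P → ℝ) (x : Fin P → ℕ) :
    Real.exp (nodeSum α x) = ∏ j, Real.exp (α j) ^ x j / (x j).factorial := by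
  rw [nodeSum, Real.exp_sum]
  refine Finset.prod_congr rfl fun j _ => ?_
  rw [Real.exp_sub, Real.exp_log (mod_cast (x j).factorial_pos), mul_comm, Real.exp_nat_mul]

theorem hasSum_exp_nodeSum {P : ℕ} (α : Fin P → ℝ) :
    HasSum (fun x => Real.exp (nodeSum α x)) (Real.exp (∑ j, Real.exp (α j))) := by
  simp_rw [exp_nodeSum, Real.exp_sum,
    ← fun j => (Real.hasSum_pow_div_factorial (Real.exp (α j))).tsum_eq]
  exact hasSum_prod_pi_of_nonneg P (fun j m => by positivity)
    fun j => (Real.hasSum_pow_div_factorial _).summable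

theorem abs_edgeSum_le {P : ℕ} (β : Fin P → Fin P → ℝ) {F : ℕ → ℝ} {U : ℝ}
    (hFU : ∀ x, |F x| ≤ U) (x : Fin P → ℕ) :
    |edgeSum β F x| ≤ U ^ 2 * ∑ j, ∑ l, if j < l then |β j l| else 0 := by
  rw [edgeSum, Finset.mul_sum]
  refine (Finset.abs_sum_le_sum_abs _ _).trans (Finset.sum_le_sum fun j _ => ?_)
  rw [Finset.mul_sum]
  refine (Finset.abs_sum_le_sum_abs _ _).trans (Finset.sum_le_sum fun l _ => ?_)
  split_ifs
  · rw [abs_mul, abs_mul, mul_assoc, mul_comm (U ^ 2), sq]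
    have hU : 0 ≤ U := (abs_nonneg _).trans (hFU 0)
    gcongr
    exacts [hFU _, hFU _]
  · simp

theorem stmt0_general (P : ℕ) (α : Fin P → ℝ) (β : Fin P → Fin P → ℝ)
    (F : ℕ → ℝ) (U : ℝ) (hF0 : ∀ x, 0 ≤ F x) (hFU : ∀ x, F x ≤ U) :
    Real.exp ((∑ j, Real.exp (α j)) - U ^ 2 * ∑ j, ∑ l, if j < l then |β j l| else 0)
        ≤ Anorm α β F ∧
      Anorm α β F
        ≤ Real.exp ((∑ j, Real.exp (α j)) + U ^ 2 * ∑ j, ∑ l, if j < l then |β j l| else 0) := by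
  set E := U ^ 2 * ∑ j, ∑ l, if j < l then |β j l| else 0
  have hEdge : ∀ x, |edgeSum β F x| ≤ E :=
    abs_edgeSum_le β fun x => (abs_of_nonneg (hF0 x)).trans_le (hFU x)
  rw [sub_eq_add_neg, Real.exp_add, Real.exp_add, mul_comm _ (Real.exp (-E)),
    mul_comm _ (Real.exp E)]
  refine (hasSum_exp_nodeSum α).mul_le_tsum_and_tsum_le_mul (fun x => ?_) (fun x => ?_)
  · rw [← Real.exp_add, w]
    exact Real.exp_le_exp.mpr (by linarith [(abs_le.mp (hEdge x)).2])
  · rw [← Real.exp_add, w]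
    exact Real.exp_le_exp.mpr (by linarith [(abs_le.mp (hEdge x)).1])

theorem stmt0 (P : ℕ) (hP : 0 < P) (α : Fin P → ℝ) (β : Fin P → Fin P → ℝ)
    (F : ℕ → ℝ) (U : ℝ) (hU : 0 ≤ U) (hF0 : ∀ x, 0 ≤ F x) (hFU : ∀ x, F x ≤ U) :
    Real.exp ((∑ j, Real.exp (α j)) - U ^ 2 * ∑ j, ∑ l, if j < l then |β j l| else 0)
        ≤ Anorm α β F ∧
      Anorm α β F
        ≤ Real.exp ((∑ j, Real.exp (α j)) + U ^ 2 * ∑ j, ∑ l, if j < l then |β j l| else 0) :=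
  stmt0_general P α β F U hF0 hFU
end

section
/- Consider the joint pmf on ℕ^P proportional to exp(Σ_h (α_h x_h − log(x_h!)) − Σ_{g<h} β_{gh} F(x_g) F(x_h)) with F bounded. If β_{jl} = 0 for some pair j < l, then X_j and X_l are conditionally independent given the remaining coordinates: P(X_j = a, X_l = b | X_{−(j,l)}) = P(X_j = a | X_{−(j,l)}) · P(X_l = b | X_{−(j,l)}) for all a, b ∈ ℕ. -/
open scoped BigOperators

/-! With `β j l = β l j = 0` no summand of the exponent `nodeSum α - edgeSum β F` involves both
`x j` and `x l`, so along the slice `(a, b) ↦ update (update x j a) l b` the weight factors as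
`g a * h b`. For a product kernel the joint mass is the product of its two marginals divided
by the total mass, which is the claimed identity; the normalizing constant `Anorm` only
rescales `h`. -/

open Function

theorem div_tsum_mul_eq_mul_div_tsum {𝕜 ι κ : Type*} [NormedField 𝕜] [CompleteSpace 𝕜]
    (g : ι → 𝕜) (h : κ → 𝕜) (i : ι) (k : κ) :
    g i * h k / ∑' p : ι × κ, g p.1 * h p.2
      = (∑' k', g i * h k') / (∑' p : ι × κ, g p.1 * h p.2)
        * ((∑' i', g i' * h k) / ∑' p : ι × κ, g p.1 * h p.2) := by
  set S := ∑' p : ι × κ, g p.1 * h p.2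
  -- this case includes the non-summable one, where all three quotients are junk `_ / 0 = 0`
  rcases eq_or_ne S 0 with hS | hS
  · simp [hS]
  have hsum : Summable fun p : ι × κ => g p.1 * h p.2 := by
    by_contra hns
    exact hS (tsum_eq_zero_of_not_summable hns)
  have hGH : S = (∑' i', g i') * ∑' k', h k' := by
    simp only [S, hsum.tsum_prod, tsum_mul_left, tsum_mul_right]
  rw [tsum_mul_left, tsum_mul_right, hGH]
  rw [hGH] at hS
  have hG := left_ne_zero_of_mul hS
  have hH := right_ne_zero_of_mul hS
  field_simp

section InteractionFree

variable {ι M R : Type*} [DecidableEq ι]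

-- equivalently, on each slice `E (update (update x j a) l b) = u a + v b`
def IsInteractionFree [Add R] (j l : ι) (E : (ι → M) → R) : Prop :=
  ∀ x a a' b b', E (update (update x j a) l b) + E (update (update x j a') l b')
    = E (update (update x j a) l b') + E (update (update x j a') l b)

variable {j l : ι}

theorem IsInteractionFree.sub [AddCommGroup R] {E₁ E₂ : (ι → M) → R}
    (h₁ : IsInteractionFree j l E₁) (h₂ : IsInteractionFree j l E₂) :
    IsInteractionFree j l (E₁ - E₂) := by
  intro x a a' b b'
  simp only [Pi.sub_apply, sub_add_sub_comm, h₁ x a a' b b', h₂ x a a' b b']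

theorem IsInteractionFree.sum [AddCommMonoid R] {τ : Type*} (s : Finset τ)
    {E : τ → (ι → M) → R} (h : ∀ t ∈ s, IsInteractionFree j l (E t)) :
    IsInteractionFree j l fun y => ∑ t ∈ s, E t y := by
  intro x a a' b b'
  simp only [← Finset.sum_add_distrib]
  exact Finset.sum_congr rfl fun t ht => h t ht x a a' b b'

theorem isInteractionFree_of_update_right [Add R] {E : (ι → M) → R}
    (hE : ∀ y m, E (update y l m) = E y) : IsInteractionFree j l E := by
  intro x a a' b b'
  simp only [hE]

theorem isInteractionFree_of_update_left [AddCommMagma R] (hjl : j ≠ l) {E : (ι → M) → R}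
    (hE : ∀ y m, E (update y j m) = E y) : IsInteractionFree j l E := by
  intro x a a' b b'
  simp only [update_comm hjl, hE]
  exact add_comm _ _

end InteractionFree

section PairwiseMRF

variable {P : ℕ} {j l : Fin P}

theorem isInteractionFree_nodeSum (hjl : j ≠ l) (α : Fin P → ℝ) :
    IsInteractionFree j l (nodeSum α) := by
  refine IsInteractionFree.sum Finset.univ fun k _ => ?_
  rcases eq_or_ne k l with rfl | hkl
  · exact isInteractionFree_of_update_left hjl fun y m => by rw [update_of_ne hjl.symm]
  · exact isInteractionFree_of_update_right fun y m => by rw [update_of_ne hkl]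

theorem isInteractionFree_edgeSum (hjl : j ≠ l) {β : Fin P → Fin P → ℝ} (hβ : β j l = 0)
    (hβ' : β l j = 0) (F : ℕ → ℝ) : IsInteractionFree j l (edgeSum β F) := by
  refine IsInteractionFree.sum Finset.univ fun g _ =>
    IsInteractionFree.sum Finset.univ fun h _ => ?_
  by_cases hl : g ≠ l ∧ h ≠ l
  · exact isInteractionFree_of_update_right fun y m => by
      rw [update_of_ne hl.1, update_of_ne hl.2]
  by_cases hj : g ≠ j ∧ h ≠ j
  · exact isInteractionFree_of_update_left hjl fun y m => by
      rw [update_of_ne hj.1, update_of_ne hj.2]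
  have hgh : β g h = 0 := by grind
  exact isInteractionFree_of_update_right fun y m => by simp only [hgh, zero_mul]

theorem w_pos (α : Fin P → ℝ) (β : Fin P → Fin P → ℝ) (F : ℕ → ℝ) (x : Fin P → ℕ) :
    0 < w α β F x :=
  Real.exp_pos _

theorem w_mul_w_swap (hjl : j ≠ l) (α : Fin P → ℝ) {β : Fin P → Fin P → ℝ} (hβ : β j l = 0)
    (hβ' : β l j = 0) (F : ℕ → ℝ) (x : Fin P → ℕ) (a a' b b' : ℕ) :
    w α β F (update (update x j a) l b) * w α β F (update (update x j a') l b')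
      = w α β F (update (update x j a) l b') * w α β F (update (update x j a') l b) := by
  simp only [w, ← Real.exp_add]
  exact congrArg Real.exp
    ((isInteractionFree_nodeSum hjl α).sub (isInteractionFree_edgeSum hjl hβ hβ' F) x a a' b b')

end PairwiseMRF

theorem stmt2_general (P : ℕ) (α : Fin P → ℝ) (β : Fin P → Fin P → ℝ)
    (F : ℕ → ℝ)
    (j l : Fin P) (hjl : j ≠ l) (hβ : β j l = 0) (hβ' : β l j = 0)
    (x : Fin P → ℕ) (a b : ℕ) :
    (fun y => w α β F y / Anorm α β F)
        (Function.update (Function.update x j a) l b) /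
      (∑' ab : ℕ × ℕ, (fun y => w α β F y / Anorm α β F)
        (Function.update (Function.update x j ab.1) l ab.2))
    = ((∑' b' : ℕ, (fun y => w α β F y / Anorm α β F)
          (Function.update (Function.update x j a) l b')) /
        (∑' ab : ℕ × ℕ, (fun y => w α β F y / Anorm α β F)
          (Function.update (Function.update x j ab.1) l ab.2))) *
      ((∑' a' : ℕ, (fun y => w α β F y / Anorm α β F)
          (Function.update (Function.update x j a') l b)) /
        (∑' ab : ℕ × ℕ, (fun y => w α β F y / Anorm α β F)
          (Function.update (Function.update x j ab.1) l ab.2))) := by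
  have hfactor : ∀ a b, w α β F (update (update x j a) l b) / Anorm α β F
      = w α β F (update (update x j a) l 0) * (w α β F (update (update x j 0) l b)
        / (Anorm α β F * w α β F (update (update x j 0) l 0))) := by
    intro a b
    rw [← mul_div_assoc, ← w_mul_w_swap hjl α hβ hβ' F x a 0 b 0,
      mul_div_mul_right _ _ (w_pos α β F _).ne']
  simp only [hfactor]
  exact div_tsum_mul_eq_mul_div_tsum (fun a => w α β F (update (update x j a) l 0))
    (fun b => w α β F (update (update x j 0) l b)
      / (Anorm α β F * w α β F (update (update x j 0) l 0))) a b

theorem stmt2 (P : ℕ) (α : Fin P → ℝ) (β : Fin P → Fin P → ℝ)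
    (F : ℕ → ℝ) (U : ℝ) (hF : ∀ x, |F x| ≤ U)
    (j l : Fin P) (hjl : j ≠ l) (hβ : β j l = 0) (hβ' : β l j = 0)
    (x : Fin P → ℕ) (a b : ℕ) :
    (fun y => w α β F y / Anorm α β F)
        (Function.update (Function.update x j a) l b) /
      (∑' ab : ℕ × ℕ, (fun y => w α β F y / Anorm α β F)
        (Function.update (Function.update x j ab.1) l ab.2))
    = ((∑' b' : ℕ, (fun y => w α β F y / Anorm α β F)
          (Function.update (Function.update x j a) l b')) /
        (∑' ab : ℕ × ℕ, (fun y => w α β F y / Anorm α β F)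
          (Function.update (Function.update x j ab.1) l ab.2))) *
      ((∑' a' : ℕ, (fun y => w α β F y / Anorm α β F)
          (Function.update (Function.update x j a') l b)) /
        (∑' ab : ℕ × ℕ, (fun y => w α β F y / Anorm α β F)
          (Function.update (Function.update x j ab.1) l ab.2))) :=
  stmt2_general P α β F j l hjl hβ hβ' x a b
end

section
/- The conditional distribution of X_j given X_{−j} = x_{−j} under the CONGA model is proportional to exp(x log λ_j − log(x!) − c (arctan x)^θ) for x ∈ ℕ, where c = Σ_{l≠j} β_{jl} (arctan x_l)^θ and log λ_j = α_j; i.e., the conditional pmf equals this expression divided by its sum over x ∈ ℕ, and this sum is finite. -/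
open scoped BigOperators

lemma sum_update_eq {P : ℕ} (x : Fin P → ℕ) (j : Fin P) (f : Fin P → ℕ → ℝ) (a : ℕ) :
    ∑ l, f l (Function.update x j a l)
      = f j a + ∑ l ∈ Finset.univ.erase j, f l (x l) := by
  rw [← Finset.add_sum_erase Finset.univ (fun l => f l (Function.update x j a l))
    (Finset.mem_univ j), Function.update_self]
  congr 1
  exact Finset.sum_congr rfl fun l hl => by
    rw [Function.update_of_ne (Finset.ne_of_mem_erase hl)]

lemma nodeSum_update {P : ℕ} (α : Fin P → ℝ) (x : Fin P → ℕ) (j : Fin P) (a : ℕ) :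
    nodeSum α (Function.update x j a)
      = (α j * (a : ℝ) - Real.log (Nat.factorial a))
        + ∑ l ∈ Finset.univ.erase j, (α l * (x l : ℝ) - Real.log (Nat.factorial (x l))) := by
  unfold nodeSum
  exact sum_update_eq x j (fun l n => α l * (n : ℝ) - Real.log (Nat.factorial n)) a

lemma edgeSum_update {P : ℕ} (β : Fin P → Fin P → ℝ) (F : ℕ → ℝ) (x : Fin P → ℕ)
    (j : Fin P) (a : ℕ) :
    edgeSum β F (Function.update x j a)
      = (∑ l, (if j < l then β j l else if l < j then β l j else 0) * F (x l)) * F a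
        + ∑ g ∈ Finset.univ.erase j, ∑ l ∈ Finset.univ.erase j,
            (if g < l then β g l * F (x g) * F (x l) else 0) := by
  unfold edgeSum
  rw [← Finset.add_sum_erase Finset.univ
    (fun g => ∑ l, if g < l then β g l * F (Function.update x j a g) * F (Function.update x j a l) else 0)
    (Finset.mem_univ j)]
  have h1 : (∑ l, if j < l then β j l * F (Function.update x j a j) * F (Function.update x j a l) else 0)
      = (∑ l, (if j < l then β j l * F (x l) else 0)) * F a := by
    rw [Finset.sum_mul]
    refine Finset.sum_congr rfl fun l _ => ?_
    by_cases h : j < l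
    · rw [if_pos h, if_pos h, Function.update_self, Function.update_of_ne (ne_of_gt h)]
      ring
    · rw [if_neg h, if_neg h, zero_mul]
  have h2 : ∀ g ∈ Finset.univ.erase j,
      (∑ l, if g < l then β g l * F (Function.update x j a g) * F (Function.update x j a l) else 0)
        = (if g < j then β g j * F (x g) else 0) * F a
          + ∑ l ∈ Finset.univ.erase j, (if g < l then β g l * F (x g) * F (x l) else 0) := by
    intro g hg
    have hgj : g ≠ j := Finset.ne_of_mem_erase hg
    rw [← Finset.add_sum_erase Finset.univ _ (Finset.mem_univ j)]
    congr 1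
    · rw [Function.update_self, Function.update_of_ne hgj]
      split_ifs with h <;> ring
    · refine Finset.sum_congr rfl fun l hl => ?_
      rw [Function.update_of_ne (Finset.ne_of_mem_erase hl), Function.update_of_ne hgj]
  rw [h1, Finset.sum_congr rfl h2, Finset.sum_add_distrib, ← Finset.sum_mul]
  have h3 : (∑ g ∈ Finset.univ.erase j, (if g < j then β g j * F (x g) else 0))
      = ∑ g, (if g < j then β g j * F (x g) else 0) := by
    rw [← Finset.add_sum_erase Finset.univ (fun g => if g < j then β g j * F (x g) else 0)
      (Finset.mem_univ j), if_neg (lt_irrefl j), zero_add]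
  have h4 : (∑ l, (if j < l then β j l else if l < j then β l j else 0) * F (x l))
      = (∑ l, (if j < l then β j l * F (x l) else 0))
        + ∑ l, (if l < j then β l j * F (x l) else 0) := by
    rw [← Finset.sum_add_distrib]
    refine Finset.sum_congr rfl fun l _ => ?_
    by_cases h1' : j < l
    · simp [h1', asymm h1']
    · by_cases h2' : l < j
      · simp [h1', h2']
      · simp [h1', h2']
  rw [h3, h4, add_mul]
  ring

lemma arctan_nat_nonneg (n : ℕ) : 0 ≤ Real.arctan (n : ℝ) := by
  rw [← Real.arctan_zero]
  exact Real.arctan_strictMono.monotone (Nat.cast_nonneg n)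

lemma Fpow_nonneg (θ : ℝ) (n : ℕ) : 0 ≤ Fpow θ n :=
  Real.rpow_nonneg (arctan_nat_nonneg n) θ

lemma Fpow_le (θ : ℝ) (hθ : 0 < θ) (n : ℕ) : Fpow θ n ≤ (Real.pi / 2) ^ θ :=
  Real.rpow_le_rpow (arctan_nat_nonneg n)
    (Real.arctan_lt_pi_div_two _).le hθ.le

lemma summable_g (θ : ℝ) (hθ : 0 < θ) (A C : ℝ) :
    Summable (fun a : ℕ => Real.exp ((a : ℝ) * A - Real.log (Nat.factorial a)
      - C * Fpow θ a)) := by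
  have hb : Summable (fun a : ℕ =>
      Real.exp (|C| * (Real.pi / 2) ^ θ) * (Real.exp A ^ a / (Nat.factorial a : ℝ))) :=
    (Real.summable_pow_div_factorial (Real.exp A)).mul_left _
  refine Summable.of_nonneg_of_le (fun a => (Real.exp_pos _).le) (fun a => ?_) hb
  have h1 : (a : ℝ) * A - Real.log (Nat.factorial a) - C * Fpow θ a
      ≤ |C| * (Real.pi / 2) ^ θ + ((a : ℝ) * A - Real.log (Nat.factorial a)) := by
    have h2 : -(C * Fpow θ a) ≤ |C| * (Real.pi / 2) ^ θ := by
      calc -(C * Fpow θ a) = (-C) * Fpow θ a := by ring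
        _ ≤ |C| * Fpow θ a := mul_le_mul_of_nonneg_right (neg_le_abs C) (Fpow_nonneg θ a)
        _ ≤ |C| * (Real.pi / 2) ^ θ :=
            mul_le_mul_of_nonneg_left (Fpow_le θ hθ a) (abs_nonneg C)
    linarith
  calc Real.exp ((a : ℝ) * A - Real.log (Nat.factorial a) - C * Fpow θ a)
      ≤ Real.exp (|C| * (Real.pi / 2) ^ θ + ((a : ℝ) * A - Real.log (Nat.factorial a))) :=
        Real.exp_le_exp.mpr h1
    _ = Real.exp (|C| * (Real.pi / 2) ^ θ) * (Real.exp A ^ a / (Nat.factorial a : ℝ)) := by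
        rw [Real.exp_add, Real.exp_sub, Real.exp_log (by positivity : (0:ℝ) < (Nat.factorial a : ℝ)),
          ← Real.exp_nat_mul, mul_comm (a : ℝ) A]

theorem stmt11 (P : ℕ) (θ : ℝ) (hθ : 0 < θ) (α : Fin P → ℝ)
    (β : Fin P → Fin P → ℝ) (j : Fin P) (x : Fin P → ℕ) :
    Summable (fun a : ℕ => Real.exp ((a : ℝ) * α j - Real.log (Nat.factorial a)
        - (∑ l, (if j < l then β j l else if l < j then β l j else 0) * Fpow θ (x l))
          * Fpow θ a)) ∧
      ∀ a : ℕ,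
        w α β (Fpow θ) (Function.update x j a) /
            (∑' b : ℕ, w α β (Fpow θ) (Function.update x j b))
          = Real.exp ((a : ℝ) * α j - Real.log (Nat.factorial a)
              - (∑ l, (if j < l then β j l else if l < j then β l j else 0) * Fpow θ (x l))
                * Fpow θ a) /
            (∑' b : ℕ, Real.exp ((b : ℝ) * α j - Real.log (Nat.factorial b)
              - (∑ l, (if j < l then β j l else if l < j then β l j else 0) * Fpow θ (x l))
                * Fpow θ b)) := by
  set C : ℝ := ∑ l, (if j < l then β j l else if l < j then β l j else 0) * Fpow θ (x l) with hC
  set g : ℕ → ℝ := fun a => (a : ℝ) * α j - Real.log (Nat.factorial a) - C * Fpow θ a with hg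
  set D : ℝ := (∑ l ∈ Finset.univ.erase j, (α l * (x l : ℝ) - Real.log (Nat.factorial (x l))))
      - ∑ g' ∈ Finset.univ.erase j, ∑ l ∈ Finset.univ.erase j,
          (if g' < l then β g' l * Fpow θ (x g') * Fpow θ (x l) else 0) with hD
  have key : ∀ a : ℕ, w α β (Fpow θ) (Function.update x j a) = Real.exp D * Real.exp (g a) := by
    intro a
    rw [w, nodeSum_update, edgeSum_update, ← Real.exp_add, hg, hD, hC]
    ring_nf
  refine ⟨summable_g θ hθ (α j) C, fun a => ?_⟩
  have htsum : (∑' b : ℕ, w α β (Fpow θ) (Function.update x j b))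
      = Real.exp D * ∑' b : ℕ, Real.exp (g b) := by
    rw [← tsum_mul_left]
    exact tsum_congr fun b => key b
  rw [key a, htsum, mul_div_mul_left _ _ (Real.exp_ne_zero D)]
end

section
/- If β_{jl} ≤ 0 for all j < l, then the Poisson auto-model conditional specification P(X_j = x | X_{−j}) = Poisson(μ_j) with μ_j = exp(α_j + Σ_{l≠j} β_{jl} x_l) admits a finite joint normalizing constant: Σ_{x∈ℕ^P} exp(Σ_j (α_j x_j − log x_j!) + Σ_{j<l} β_{jl} x_j x_l) < ∞. -/
/-!
Nonpositive interactions can only lower the weight of a configuration, so the auto-model is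
dominated termwise by the product of independent Poisson weights `∏ j, exp (α j) ^ x j / (x j)!`.
That product is summable over `ℕ^P`: every finite partial sum lies inside a box, where it factors
into a product of partial sums of exponential series.
-/

open Finset

theorem summable_prod_apply_of_nonneg {ι κ : Type*} [Fintype ι] {f : ι → κ → ℝ}
    (hf : ∀ i k, 0 ≤ f i k) (hs : ∀ i, Summable (f i)) :
    Summable fun x : ι → κ => ∏ i, f i (x i) := by
  classical
  refine summable_of_sum_le (c := ∏ i, ∑' k, f i k)
    (fun x => prod_nonneg fun i _ => hf i (x i)) fun s => ?_
  calc ∑ x ∈ s, ∏ i, f i (x i)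
      ≤ ∑ x ∈ Fintype.piFinset fun i => s.image (· i), ∏ i, f i (x i) :=
        sum_le_sum_of_subset_of_nonneg
          (fun x hx => Fintype.mem_piFinset.2 fun i => mem_image_of_mem (· i) hx)
          fun x _ _ => prod_nonneg fun i _ => hf i (x i)
    _ = ∏ i, ∑ k ∈ s.image (· i), f i k := (prod_univ_sum _ _).symm
    _ ≤ ∏ i, ∑' k, f i k :=
        prod_le_prod (fun i _ => sum_nonneg fun k _ => hf i k)
          fun i _ => (hs i).sum_le_tsum _ fun k _ => hf i k

theorem sum_sum_ite_lt_mul_nonpos {ι : Type*} [Fintype ι] [LinearOrder ι] {β : ι → ι → ℝ}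
    (hβ : ∀ j l, j < l → β j l ≤ 0) {y : ι → ℝ} (hy : ∀ j, 0 ≤ y j) :
    ∑ j, ∑ l, (if j < l then β j l * y j * y l else 0) ≤ 0 :=
  sum_nonpos fun j _ => sum_nonpos fun l _ => by
    split_ifs with h
    · exact mul_nonpos_of_nonpos_of_nonneg
        (mul_nonpos_of_nonpos_of_nonneg (hβ j l h) (hy j)) (hy l)
    · exact le_rfl

theorem Real.exp_mul_sub_log_factorial (a : ℝ) (n : ℕ) :
    Real.exp (a * n - Real.log n.factorial) = Real.exp a ^ n / n.factorial := by
  rw [Real.exp_sub, Real.exp_log (by positivity), ← Real.exp_nat_mul, mul_comm]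

theorem stmt13 (P : ℕ) (α : Fin P → ℝ) (β : Fin P → Fin P → ℝ)
    (hβ : ∀ j l : Fin P, j < l → β j l ≤ 0) :
    Summable (fun x : Fin P → ℕ =>
      Real.exp ((∑ j, (α j * (x j : ℝ) - Real.log (Nat.factorial (x j))))
        + ∑ j, ∑ l, if j < l then β j l * (x j : ℝ) * (x l : ℝ) else 0)) := by
  have hPoisson := summable_prod_apply_of_nonneg (fun _ _ => by positivity)
    fun j => Real.summable_pow_div_factorial (Real.exp (α j))
  refine hPoisson.of_nonneg_of_le (fun x => (Real.exp_pos _).le) fun x => ?_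
  calc _ ≤ Real.exp (∑ j, (α j * (x j : ℝ) - Real.log (Nat.factorial (x j)))) :=
        Real.exp_le_exp.2 <| add_le_of_nonpos_right <|
          sum_sum_ite_lt_mul_nonpos hβ fun j => Nat.cast_nonneg (x j)
    _ = ∏ j, Real.exp (α j) ^ x j / (x j).factorial := by
        rw [Real.exp_sum]
        exact prod_congr rfl fun j _ => Real.exp_mul_sub_log_factorial (α j) (x j)
end

section
/- For P = 2, if β_{12} > 0, the series Σ_{x_1,x_2 ∈ ℕ} exp(α_1 x_1 + α_2 x_2 − log(x_1!) − log(x_2!) + β_{12} x_1 x_2) diverges, so the Poisson auto-model with positive dependence does not define a valid probability distribution. -/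
open Filter Real

theorem stmt14 (α₁ α₂ β : ℝ) (hβ : 0 < β) :
    ¬ Summable (fun x : ℕ × ℕ =>
      Real.exp (α₁ * (x.1 : ℝ) + α₂ * (x.2 : ℝ) - Real.log (Nat.factorial x.1)
        - Real.log (Nat.factorial x.2) + β * (x.1 : ℝ) * (x.2 : ℝ))) := by
  intro h
  have hinj : Function.Injective (fun n : ℕ => (n, n)) := by
    intro a b hab; simpa using congrArg Prod.fst hab
  have hd := (h.comp_injective hinj).tendsto_atTop_zero
  have hlt := hd.eventually_lt_const (by norm_num : (0:ℝ) < 1)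
  have hlog : ∀ᶠ x : ℝ in atTop, ‖Real.log x‖ ≤ β/4 * ‖x‖ :=
    Real.isLittleO_log_id_atTop.bound (by positivity)
  obtain ⟨N, hN⟩ := Filter.eventually_atTop.mp hlog
  have hcast : Tendsto (fun n : ℕ => (n : ℝ)) atTop atTop := tendsto_natCast_atTop_atTop
  have hev1 : ∀ᶠ n : ℕ in atTop, (n : ℝ) ≥ max N 1 := hcast.eventually_ge_atTop _
  have hev2 : ∀ᶠ n : ℕ in atTop, β/2 * (n : ℝ) ≥ -(α₁ + α₂) :=
    (hcast.const_mul_atTop (by positivity : (0:ℝ) < β/2)).eventually_ge_atTop _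
  have : ∀ᶠ n : ℕ in atTop, False := by
    filter_upwards [hlt, hev1, hev2] with n h1 h2 h3
    have hn1 : (1:ℝ) ≤ (n:ℝ) := le_trans (le_max_right _ _) h2
    have hnN : N ≤ (n:ℝ) := le_trans (le_max_left _ _) h2
    have hlogn : Real.log (n:ℝ) ≤ β/4 * (n:ℝ) := by
      have := hN (n:ℝ) hnN
      rwa [Real.norm_of_nonneg (Real.log_nonneg hn1),
        Real.norm_of_nonneg (by positivity)] at this
    have hfact : Real.log (Nat.factorial n : ℝ) ≤ (n:ℝ) * Real.log (n:ℝ) := by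
      calc Real.log (Nat.factorial n : ℝ) ≤ Real.log ((n:ℝ)^n) := by
            apply Real.log_le_log (by positivity)
            exact_mod_cast Nat.factorial_le_pow n
        _ = (n:ℝ) * Real.log (n:ℝ) := by rw [Real.log_pow]
    have hE : (0:ℝ) ≤ α₁ * (n:ℝ) + α₂ * (n:ℝ) - Real.log (Nat.factorial n)
        - Real.log (Nat.factorial n) + β * (n:ℝ) * (n:ℝ) := by
      nlinarith [mul_le_mul_of_nonneg_left hlogn (by positivity : (0:ℝ) ≤ (n:ℝ)),
        mul_le_mul_of_nonneg_left h3 (by positivity : (0:ℝ) ≤ (n:ℝ))]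
    have := Real.one_le_exp hE
    simp only [Function.comp] at h1
    linarith
  simpa using this.exists
end
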